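/- arXiv:1608.03380 — 2 statements merged into one kernel-verified Lean document; each statement's English description precedes it below -/
import Mathlib

section
/- Let l, w be natural numbers with l ≤ w and w ≥ 1. Let n = w + l. Consider maximizing f(y) = Σ_{i=1}^{l} 2·log(y_i) + Σ_{i=l+1}^{w} log(y_i) over y ∈ ℝ^w with y_i > 0 for all i and Σ_{i=1}^w y_i ≤ 1. Then the maximum is attained at y_i = 2/n for i = 1,…,l and y_i = 1/n for i = l+1,…,w. -/
lemma log_le_log_add (x a : ℝ) (hx : 0 < x) (ha : 0 < a) :
    Real.log x ≤ Real.log a + (x - a) / a := by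
  have h := Real.log_le_sub_one_of_pos (show 0 < x / a by positivity)
  rw [Real.log_div hx.ne' ha.ne'] at h
  have : x / a - 1 = (x - a) / a := by field_simp
  linarith [this ▸ h]

lemma card_filter_lt (l w : ℕ) (hlw : l ≤ w) :
    (Finset.univ.filter (fun i : Fin w => (i : ℕ) < l)).card = l := by
  have : (Finset.univ.filter (fun i : Fin w => (i : ℕ) < l)) =
      (Finset.range l).attachFin (fun m hm => lt_of_lt_of_le (Finset.mem_range.mp hm) hlw) := by
    ext i
    simp [Finset.mem_attachFin]
  rw [this, Finset.card_attachFin, Finset.card_range]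

/-- Lemma 2 (optimal resource allocation): with `l` client-relay pairs (counted twice in the
logarithmic utility) and `w - l` single connections, `n = w + l`, the maximum of
`∑_{i<l} 2 log y_i + ∑_{l≤i<w} log y_i` over positive `y` with `∑ y_i ≤ 1` is attained at
`y_i = 2/n` for `i < l` and `y_i = 1/n` otherwise. -/
theorem stmt_1 (l w : ℕ) (hlw : l ≤ w) (hw : 1 ≤ w) :
    let n : ℕ := w + l
    let f : (Fin w → ℝ) → ℝ :=
      fun y => ∑ i : Fin w, (if (i : ℕ) < l then 2 * Real.log (y i) else Real.log (y i))
    let ystar : Fin w → ℝ := fun i => if (i : ℕ) < l then 2 / n else 1 / n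
    ((∀ i, 0 < ystar i) ∧ ∑ i, ystar i ≤ 1) ∧
    (∀ y : Fin w → ℝ, (∀ i, 0 < y i) → ∑ i, y i ≤ 1 → f y ≤ f ystar) := by
  intro n f ystar
  have hn : 0 < (n : ℝ) := by
    have : 1 ≤ n := le_trans hw (Nat.le_add_right w l)
    exact_mod_cast this
  have hystar_pos : ∀ i, 0 < ystar i := by
    intro i
    simp only [ystar]
    split <;> positivity
  have hsum : ∑ i, ystar i = 1 := by
    have : ∑ i, ystar i = ∑ i : Fin w, ((1 : ℝ) / n + if (i : ℕ) < l then (1:ℝ) / n else 0) := by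
      apply Finset.sum_congr rfl
      intro i _
      simp only [ystar]
      split <;> simp <;> ring
    rw [this, Finset.sum_add_distrib, Finset.sum_const, ← Finset.sum_filter]
    rw [Finset.sum_const, card_filter_lt l w hlw]
    simp only [Finset.card_univ, Fintype.card_fin, nsmul_eq_mul]
    have hnn : (n : ℝ) = (w : ℝ) + (l : ℝ) := by push_cast [n]; ring
    field_simp
    linarith [hnn]
  refine ⟨⟨hystar_pos, hsum.le⟩, ?_⟩
  intro y hy hysum
  have key : ∀ i : Fin w,
      (if (i : ℕ) < l then 2 * Real.log (y i) else Real.log (y i)) ≤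
      (if (i : ℕ) < l then 2 * Real.log (ystar i) else Real.log (ystar i))
        + (n : ℝ) * (y i - ystar i) := by
    intro i
    by_cases h : (i : ℕ) < l
    · simp only [h, if_true, ystar]
      have := log_le_log_add (y i) (2 / n) (hy i) (by positivity)
      have h2 : (y i - 2 / n) / (2 / n) = (n : ℝ) / 2 * (y i - 2 / n) := by
        field_simp
      nlinarith [this, h2]
    · simp only [h, if_false, ystar]
      have := log_le_log_add (y i) (1 / n) (hy i) (by positivity)
      have h2 : (y i - 1 / n) / (1 / n) = (n : ℝ) * (y i - 1 / n) := by
        field_simp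
      nlinarith [this, h2]
  calc f y ≤ ∑ i : Fin w, ((if (i : ℕ) < l then 2 * Real.log (ystar i) else Real.log (ystar i))
        + (n : ℝ) * (y i - ystar i)) := Finset.sum_le_sum (fun i _ => key i)
    _ = f ystar + (n : ℝ) * (∑ i, y i - ∑ i, ystar i) := by
        rw [Finset.sum_add_distrib, ← Finset.mul_sum, Finset.sum_sub_distrib]
    _ ≤ f ystar := by
        rw [hsum]
        nlinarith [hysum]
end

section
/- Let c_ij > 0 and c_jk > 0 be real numbers. Consider maximizing g(r_i, r_j) = log(r_i) + log(r_j) over r_i, r_j > 0 subject to r_i ≤ c_ij and r_i + r_j ≤ c_jk. Then the maximum is attained at r_i* = min(c_ij, c_jk/2) and r_j* = c_jk - r_i*. -/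
/-- Lemma 1(c): maximizing `log r_i + log r_j` subject to `0 < r_i ≤ c_ij`, `0 < r_j`,
`r_i + r_j ≤ c_jk` is attained at `r_i* = min (c_ij) (c_jk/2)`, `r_j* = c_jk - r_i*`. -/
theorem stmt_2 (cij cjk : ℝ) (hij : 0 < cij) (hjk : 0 < cjk) :
    let ristar : ℝ := min cij (cjk / 2)
    let rjstar : ℝ := cjk - ristar
    (0 < ristar ∧ 0 < rjstar ∧ ristar ≤ cij ∧ ristar + rjstar ≤ cjk) ∧
    (∀ ri rj : ℝ, 0 < ri → 0 < rj → ri ≤ cij → ri + rj ≤ cjk →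
      Real.log ri + Real.log rj ≤ Real.log ristar + Real.log rjstar) := by
  intro ristar rjstar
  have hr : 0 < ristar := lt_min hij (by linarith)
  have hrle : ristar ≤ cjk / 2 := min_le_right _ _
  have hrj : 0 < rjstar := by simp only [rjstar]; linarith
  refine ⟨⟨hr, hrj, min_le_left _ _, by simp only [rjstar]; linarith⟩, ?_⟩
  intro ri rj hri hrj' hric h
  have key : ri * rj ≤ ristar * rjstar := by
    have h1 : ri * rj ≤ ri * (cjk - ri) := by nlinarith
    have h2 : ri * (cjk - ri) ≤ ristar * (cjk - ristar) := by
      rcases min_cases cij (cjk / 2) with ⟨he, hle⟩ | ⟨he, hle⟩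
      · have : ristar = cij := he
        nlinarith
      · have : ristar = cjk / 2 := he
        nlinarith [sq_nonneg (ri - cjk / 2)]
    calc ri * rj ≤ ri * (cjk - ri) := h1
      _ ≤ ristar * rjstar := h2
  calc Real.log ri + Real.log rj = Real.log (ri * rj) :=
        (Real.log_mul hri.ne' hrj'.ne').symm
    _ ≤ Real.log (ristar * rjstar) :=
        Real.log_le_log (by positivity) key
    _ = Real.log ristar + Real.log rjstar := Real.log_mul hr.ne' hrj.ne'
end
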